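/- There exists a constant c such that for all natural numbers i and i': the conditional plain complexities satisfy C(i|i') ≤ log₂(|i − i'| + 1) + c and C(i'|i) ≤ log₂(|i − i'| + 1) + c; consequently, the map F: (k,l) ↦ (C(x|l), C(y|x,k)) (for fixed strings x, y) sends pairs at geometric distance d in ℤ² to pairs at distance O(log d), which yields the existence and O(1)-uniqueness of a fixed point of F. -/

import Mathlib

/-!
Given `i'`, describing `i` costs only the `log₂ |i − i'|` bits of the shift, and changing the
condition of a program costs twice that, since the shift must then be self-delimiting. Hence
`l ↦ C(x|l)` and `k ↦ C(y|x,k)` move by `O(log d)` when their argument moves by `d`. The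
composite `l ↦ C(y|x,C(x|l))` then changes by `O(1)` per unit step and is bounded, so it crosses
the diagonal within `O(1)`: a fixed point. Two fixed points at distance `D` satisfy
`D ≤ 2 log₂ (D + 1) + O(1)`, which bounds `D`.
-/

/-- Binary strings. -/
abbrev BinStr := List Bool

/-- Standard encoding of a binary string as a natural number. -/
def enc (a : BinStr) : ℕ := Encodable.encode a

/-- A (conditional) machine: it takes a program (a binary string) and a condition
(a natural number, which encodes the conditioning data: a number, a string via `enc`,
or a tuple combined with the standard pairing `Nat.pair`) and possibly outputs a
natural number (encoding the result in the same way). -/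
abbrev Machine := BinStr → ℕ →. ℕ

/-- Conditional Kolmogorov complexity of `x` given condition `y`, with respect to the
machine `U`: the minimal length of a program `p` such that `U p y = x`. -/
noncomputable def cplx (U : Machine) (x y : ℕ) : ℕ :=
  sInf {n | ∃ p : BinStr, p.length = n ∧ x ∈ U p y}

/-- Unconditional Kolmogorov complexity: conditional complexity with the trivial
condition `0`. -/
noncomputable def cplx0 (U : Machine) (x : ℕ) : ℕ := cplx U x 0

/-- `U` is an optimal universal machine for plain complexity: it is partial computable
and simulates every partial computable machine with at most a constant overhead in
program length. -/
def IsOptimal (U : Machine) : Prop :=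
  Partrec₂ U ∧
    ∀ V : Machine, Partrec₂ V →
      ∃ c : ℕ, ∀ (p : BinStr) (y x : ℕ), x ∈ V p y →
        ∃ q : BinStr, q.length ≤ p.length + c ∧ x ∈ U q y

/-- A machine is prefix-free if, for every condition, the set of its halting programs
is prefix-free: no halting program is a proper prefix of another halting program. -/
def PrefixFreeMachine (M : Machine) : Prop :=
  ∀ (y : ℕ) (p q : BinStr), p <+: q → (M p y).Dom → (M q y).Dom → p = q

/-- `U` is an optimal universal prefix-free machine: it is partial computable,
prefix-free, and simulates every partial computable prefix-free machine with at most
a constant overhead in program length. -/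
def IsPrefixOptimal (U : Machine) : Prop :=
  Partrec₂ U ∧ PrefixFreeMachine U ∧
    ∀ V : Machine, Partrec₂ V → PrefixFreeMachine V →
      ∃ c : ℕ, ∀ (p : BinStr) (y x : ℕ), x ∈ V p y →
        ∃ q : BinStr, q.length ≤ p.length + c ∧ x ∈ U q y

namespace Kolmogorov

/-- Binary reading of `s`, least significant bit first, beneath an implicit leading `1`. -/
def binValue (s : List Bool) : ℕ := s.foldr (fun b n => 2 * n + cond b 1 0) 1

theorem exists_binValue_eq (n : ℕ) :
    ∃ s : List Bool, s.length = Nat.log 2 (n + 1) ∧ binValue s = n + 1 := by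
  induction n using Nat.strong_induction_on with
  | _ n ih =>
    rcases Nat.eq_zero_or_pos n with rfl | hn
    · exact ⟨[], by simp, rfl⟩
    obtain ⟨s, hs, hsv⟩ := ih ((n + 1) / 2 - 1) (by omega)
    refine ⟨decide ((n + 1) % 2 = 1) :: s, ?_, ?_⟩
    · have hpos := Nat.log_pos (b := 2) one_lt_two (by omega : 2 ≤ n + 1)
      rw [List.length_cons, hs, Nat.sub_add_cancel (by omega), Nat.log_div_base]
      omega
    · change 2 * binValue s + _ = _
      rw [hsv]
      rcases Nat.mod_two_eq_zero_or_one (n + 1) with h | h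
      · simp only [h, zero_ne_one, decide_false, cond_false]
        omega
      · simp only [h, decide_true, cond_true]
        omega

theorem primrec_binValue : Primrec binValue := by
  have step : Primrec₂ fun (_ : List Bool) (p : Bool × ℕ) => 2 * p.2 + cond p.1 1 0 :=
    Primrec.to₂ <| Primrec.nat_add.comp
      (Primrec.nat_mul.comp (Primrec.const 2) (Primrec.snd.comp Primrec.snd))
      (Primrec.cond (Primrec.fst.comp Primrec.snd) (Primrec.const 1) (Primrec.const 0))
  exact (Primrec.list_foldr Primrec.id (Primrec.const 1) step).of_eq fun _ => rfl

/-- The self-delimiting concatenation `1^|s| 0 s q`. -/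
def delimitedAppend (s q : List Bool) : List Bool :=
  List.replicate s.length true ++ false :: (s ++ q)

def delimitedHead (p : List Bool) : List Bool :=
  (p.drop (p.idxOf false + 1)).take (p.idxOf false)

def delimitedTail (p : List Bool) : List Bool := p.drop (2 * p.idxOf false + 1)

theorem length_delimitedAppend (s q : List Bool) :
    (delimitedAppend s q).length = 2 * s.length + 1 + q.length := by
  simp only [delimitedAppend, List.length_append, List.length_replicate, List.length_cons]
  omega

theorem idxOf_false_delimitedAppend (s q : List Bool) :
    (delimitedAppend s q).idxOf false = s.length := by
  unfold delimitedAppend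
  induction s.length with
  | zero => simp
  | succ n ih => rw [List.replicate_succ]; simpa using ih

theorem drop_delimitedAppend (s q : List Bool) :
    (delimitedAppend s q).drop (s.length + 1) = s ++ q := by
  have h : delimitedAppend s q = (List.replicate s.length true ++ [false]) ++ (s ++ q) := by
    simp [delimitedAppend]
  rw [h, List.drop_left' (by simp)]

theorem delimitedHead_delimitedAppend (s q : List Bool) :
    delimitedHead (delimitedAppend s q) = s := by
  rw [delimitedHead, idxOf_false_delimitedAppend, drop_delimitedAppend, List.take_left]

theorem delimitedTail_delimitedAppend (s q : List Bool) :
    delimitedTail (delimitedAppend s q) = q := by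
  rw [delimitedTail, idxOf_false_delimitedAppend, two_mul, add_right_comm,
    ← List.drop_drop, drop_delimitedAppend, List.drop_left]

theorem primrec_delimitedHead : Primrec delimitedHead :=
  have hidx : Primrec fun p : List Bool => p.idxOf false :=
    Primrec.list_idxOf.comp (Primrec.const false) Primrec.id
  Primrec.list_take.comp hidx (Primrec.list_drop.comp (Primrec.succ.comp hidx) Primrec.id)

theorem primrec_delimitedTail : Primrec delimitedTail :=
  Primrec.list_drop.comp
    (Primrec.succ.comp (Primrec.nat_mul.comp (Primrec.const 2)
      (Primrec.list_idxOf.comp (Primrec.const false) Primrec.id)))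
    Primrec.id

def shiftMachine (U : Machine) (φ : ℕ → ℕ → ℕ) : Machine := fun p y =>
  U (delimitedTail p) (φ y (binValue (delimitedHead p) - 1))

theorem partrec₂_shiftMachine {U : Machine} (hU : Partrec₂ U) {φ : ℕ → ℕ → ℕ}
    (hφ : Computable₂ φ) : Partrec₂ (shiftMachine U φ) :=
  hU.comp (primrec_delimitedTail.to_comp.comp Computable.fst) <|
    hφ.comp Computable.snd <| Primrec.to_comp <| Primrec.nat_sub.comp
      (primrec_binValue.comp (primrec_delimitedHead.comp Primrec.fst)) (Primrec.const 1)

theorem cplx_le_length {U : Machine} {x y : ℕ} {p : BinStr} (h : x ∈ U p y) :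
    cplx U x y ≤ p.length :=
  Nat.sInf_le ⟨p, rfl, h⟩

theorem eq_add_dist_or_eq_sub_dist (i j : ℕ) : j = i + Nat.dist i j ∨ j = i - Nat.dist i j := by
  unfold Nat.dist
  omega

/-- The factor `2` is the price of a self-delimiting description of the shift. -/
def IsLogLipschitz (c : ℕ) (f : ℕ → ℕ) : Prop :=
  ∀ a b, Nat.dist (f a) (f b) ≤ 2 * Nat.log 2 (Nat.dist a b + 1) + c

theorem IsLogLipschitz.of_le {c : ℕ} {f : ℕ → ℕ}
    (h : ∀ a b, f a ≤ f b + 2 * Nat.log 2 (Nat.dist a b + 1) + c) : IsLogLipschitz c f := by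
  intro a b
  have h₁ := h a b
  have h₂ := h b a
  rw [Nat.dist_comm b a] at h₂
  change f a - f b + (f b - f a) ≤ _
  omega

theorem IsLogLipschitz.dist_le {c : ℕ} {f : ℕ → ℕ} (hf : IsLogLipschitz c f) {a b D : ℕ}
    (h : Nat.dist a b ≤ D) : Nat.dist (f a) (f b) ≤ 2 * Nat.log 2 (D + 1) + c :=
  (hf a b).trans <| by gcongr

theorem exists_dist_le_of_dist_succ_le {g : ℕ → ℕ} {E : ℕ}
    (hstep : ∀ m, Nat.dist (g (m + 1)) (g m) ≤ E) (hle : ∃ l, g l ≤ l) :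
    ∃ l, Nat.dist (g l) l ≤ E := by
  classical
  refine ⟨Nat.find hle, ?_⟩
  have hfind : g (Nat.find hle) ≤ Nat.find hle := Nat.find_spec hle
  obtain h | ⟨m, hm⟩ : Nat.find hle = 0 ∨ ∃ m, Nat.find hle = m + 1 :=
    (Nat.eq_zero_or_eq_succ_pred _).imp id fun h => ⟨_, h⟩
  · rw [h] at hfind ⊢
    unfold Nat.dist
    omega
  · have hm' : ¬ g m ≤ m := Nat.find_min hle (by omega)
    have := hstep m
    rw [hm] at hfind ⊢
    unfold Nat.dist at this ⊢
    omega

theorem IsLogLipschitz.exists_dist_comp_le {cf cg B : ℕ} {f g : ℕ → ℕ}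
    (hf : IsLogLipschitz cf f) (hg : IsLogLipschitz cg g) (hB : ∀ k, g k ≤ B) :
    ∃ l, Nat.dist (g (f l)) l ≤ 2 * Nat.log 2 (cf + 3) + cg := by
  refine exists_dist_le_of_dist_succ_le (fun m => hg.dist_le ?_) ⟨B, hB _⟩
  have := hf (m + 1) m
  rw [show Nat.dist (m + 1) m + 1 = 2 by simp [Nat.dist], Nat.log_eq_one_iff'.mpr (by norm_num)]
    at this
  omega

theorem le_of_le_two_mul_log_add {D a : ℕ} (h : D ≤ 2 * Nat.log 2 (D + 1) + a) :
    D ≤ 2 * a + 5 := by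
  set t := Nat.log 2 (D + 1)
  have hpow : 2 ^ t ≤ D + 1 := Nat.pow_log_le_self 2 (Nat.succ_ne_zero D)
  rcases Nat.lt_or_ge t 2 with ht | ht
  · omega
  · have hlt : t - 2 < 2 ^ (t - 2) := Nat.lt_two_pow_self
    have hsplit : 2 ^ t = 4 * 2 ^ (t - 2) := by
      rw [← Nat.sub_add_cancel ht, pow_add]; norm_num; ring
    omega

theorem IsLogLipschitz.max_dist_le {cf cg c₀ : ℕ} {f g : ℕ → ℕ} (hf : IsLogLipschitz cf f)
    (hg : IsLogLipschitz cg g) {k l k' l' : ℕ} (hk : Nat.dist (f l) k ≤ c₀)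
    (hl : Nat.dist (g k) l ≤ c₀) (hk' : Nat.dist (f l') k' ≤ c₀)
    (hl' : Nat.dist (g k') l' ≤ c₀) :
    max (Nat.dist k k') (Nat.dist l l') ≤ 2 * (cf + cg + 2 * c₀) + 5 := by
  apply le_of_le_two_mul_log_add
  have hfD := hf.dist_le (le_max_right (Nat.dist k k') (Nat.dist l l'))
  have hgD := hg.dist_le (le_max_left (Nat.dist k k') (Nat.dist l l'))
  have hkk : Nat.dist k k' ≤ Nat.dist (f l) k + Nat.dist (f l) (f l') + Nat.dist (f l') k' := by
    rw [Nat.dist_comm (f l) k]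
    exact (Nat.dist.triangle_inequality _ (f l') _).trans
      (by gcongr; exact Nat.dist.triangle_inequality _ _ _)
  have hll : Nat.dist l l' ≤ Nat.dist (g k) l + Nat.dist (g k) (g k') + Nat.dist (g k') l' := by
    rw [Nat.dist_comm (g k) l]
    exact (Nat.dist.triangle_inequality _ (g k') _).trans
      (by gcongr; exact Nat.dist.triangle_inequality _ _ _)
  exact max_le (by omega) (by omega)

theorem _root_.Nat.cast_dist (a b : ℕ) : ((Nat.dist a b : ℕ) : ℤ) = |(a : ℤ) - b| := by
  rw [abs_eq_max_neg]
  unfold Nat.dist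
  omega

end Kolmogorov

namespace IsOptimal

open Kolmogorov

variable {U : Machine} (hU : IsOptimal U)
include hU

theorem exists_cplx_le_length {V : Machine} (hV : Partrec₂ V) :
    ∃ c, ∀ p y x, x ∈ V p y → cplx U x y ≤ p.length + c := by
  obtain ⟨c, hc⟩ := hU.2 V hV
  refine ⟨c, fun p y x hx => ?_⟩
  obtain ⟨q, hq, hqx⟩ := hc p y x hx
  exact (cplx_le_length hqx).trans hq

theorem exists_length_eq_cplx (x y : ℕ) :
    ∃ p : BinStr, p.length = cplx U x y ∧ x ∈ U p y := by
  obtain ⟨c, hc⟩ := hU.2 (fun _ _ => Part.some x) (Partrec.const' (Part.some x))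
  obtain ⟨p, -, hp⟩ := hc [] y x (Part.mem_some x)
  have hne : {n | ∃ p : BinStr, p.length = n ∧ x ∈ U p y}.Nonempty := ⟨_, p, rfl, hp⟩
  exact Nat.sInf_mem hne

theorem exists_cplx_le (x : ℕ) : ∃ c, ∀ y, cplx U x y ≤ c := by
  obtain ⟨c, hc⟩ := hU.exists_cplx_le_length (V := fun _ _ => Part.some x) (Partrec.const' _)
  exact ⟨c, fun y => by simpa using hc [] y x (Part.mem_some x)⟩

theorem exists_cplx_apply_le {φ : ℕ → ℕ → ℕ} (hφ : Computable₂ φ) :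
    ∃ c, ∀ y n, cplx U (φ y n) y ≤ Nat.log 2 (n + 1) + c := by
  have hV : Partrec₂ fun (p : BinStr) y => Part.some (φ y (binValue p - 1)) :=
    Computable.partrec <| hφ.comp Computable.snd <| Primrec.to_comp <|
      Primrec.nat_sub.comp (primrec_binValue.comp Primrec.fst) (Primrec.const 1)
  obtain ⟨c, hc⟩ := hU.exists_cplx_le_length hV
  refine ⟨c, fun y n => ?_⟩
  obtain ⟨s, hs, hsv⟩ := exists_binValue_eq n
  simpa [hs, hsv] using hc s y _ (Part.mem_some _)

theorem exists_cplx_le_cplx_apply {φ : ℕ → ℕ → ℕ} (hφ : Computable₂ φ) :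
    ∃ c, ∀ x y n, cplx U x y ≤ cplx U x (φ y n) + 2 * Nat.log 2 (n + 1) + c := by
  obtain ⟨c, hc⟩ := hU.exists_cplx_le_length (partrec₂_shiftMachine hU.1 hφ)
  refine ⟨c + 1, fun x y n => ?_⟩
  obtain ⟨s, hs, hsv⟩ := exists_binValue_eq n
  obtain ⟨q, hq, hqx⟩ := hU.exists_length_eq_cplx x (φ y n)
  have hx : x ∈ shiftMachine U φ (delimitedAppend s q) y := by
    simpa [shiftMachine, delimitedHead_delimitedAppend, delimitedTail_delimitedAppend, hsv]
      using hqx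
  have := hc _ y x hx
  rw [length_delimitedAppend, hs, hq] at this
  omega

theorem exists_cplx_le_log_dist :
    ∃ c, ∀ i i', cplx U i i' ≤ Nat.log 2 (Nat.dist i i' + 1) + c := by
  obtain ⟨c₁, hc₁⟩ := hU.exists_cplx_apply_le Primrec.nat_add.to_comp
  obtain ⟨c₂, hc₂⟩ := hU.exists_cplx_apply_le Primrec.nat_sub.to_comp
  refine ⟨c₁ + c₂, fun i i' => ?_⟩
  rw [Nat.dist_comm]
  rcases eq_add_dist_or_eq_sub_dist i' i with h | h
  · have := hc₁ i' (Nat.dist i' i); rw [← h] at this; omega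
  · have := hc₂ i' (Nat.dist i' i); rw [← h] at this; omega

theorem exists_isLogLipschitz_cplx {α : Type*} [Primcodable α] {e : α → ℕ → ℕ}
    {π : ℕ → α × ℕ} (he : Computable₂ e) (hπ : Computable π)
    (hπe : ∀ a k, π (e a k) = (a, k)) :
    ∃ c, ∀ x a, IsLogLipschitz c fun k => cplx U x (e a k) := by
  have shift {f : ℕ → ℕ → ℕ} (hf : Computable₂ f) :
      Computable₂ fun y n => e (π y).1 (f (π y).2 n) :=
    he.comp (Computable.fst.comp (hπ.comp Computable.fst))
      (hf.comp (Computable.snd.comp (hπ.comp Computable.fst)) Computable.snd)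
  obtain ⟨c₁, hc₁⟩ := hU.exists_cplx_le_cplx_apply (shift Primrec.nat_add.to_comp)
  obtain ⟨c₂, hc₂⟩ := hU.exists_cplx_le_cplx_apply (shift Primrec.nat_sub.to_comp)
  refine ⟨c₁ + c₂, fun x a => IsLogLipschitz.of_le fun k k' => ?_⟩
  rcases eq_add_dist_or_eq_sub_dist k k' with h | h
  · have := hc₁ x (e a k) (Nat.dist k k')
    simp only [hπe, ← h] at this
    omega
  · have := hc₂ x (e a k) (Nat.dist k k')
    simp only [hπe, ← h] at this
    omega

end IsOptimal

/-- `C(i|i') ≤ log₂(|i − i'| + 1) + c` and symmetrically; consequently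
the map `F : (k,l) ↦ (C(x|l), C(y|x,k))` sends pairs at distance `d` to pairs at distance
`O(log d)`, which yields existence and `O(1)`-uniqueness of a fixed point of `F`. -/
theorem nearby_numbers_and_fixed_point (U : Machine) (hU : IsOptimal U) :
    (∃ c : ℕ, ∀ i i' : ℕ,
        cplx U i i' ≤ Nat.log 2 (Nat.dist i i' + 1) + c ∧
        cplx U i' i ≤ Nat.log 2 (Nat.dist i i' + 1) + c) ∧
    (∃ c : ℕ, ∀ (x y : BinStr) (k l k' l' : ℕ),
        max (Nat.dist (cplx U (enc x) l) (cplx U (enc x) l'))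
            (Nat.dist (cplx U (enc y) (Nat.pair (enc x) k))
              (cplx U (enc y) (Nat.pair (enc x) k'))) ≤
          c * Nat.log 2 (max (Nat.dist k k') (Nat.dist l l') + 1) + c) ∧
    (∃ c : ℕ, ∀ x y : BinStr, ∃ k l : ℕ,
        |(cplx U (enc x) l : ℤ) - (k : ℤ)| ≤ (c : ℤ) ∧
        |(cplx U (enc y) (Nat.pair (enc x) k) : ℤ) - (l : ℤ)| ≤ (c : ℤ)) ∧
    (∀ c₀ : ℕ, ∃ c : ℕ, ∀ (x y : BinStr) (k l k' l' : ℕ),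
        |(cplx U (enc x) l : ℤ) - (k : ℤ)| ≤ (c₀ : ℤ) →
        |(cplx U (enc y) (Nat.pair (enc x) k) : ℤ) - (l : ℤ)| ≤ (c₀ : ℤ) →
        |(cplx U (enc x) l' : ℤ) - (k' : ℤ)| ≤ (c₀ : ℤ) →
        |(cplx U (enc y) (Nat.pair (enc x) k') : ℤ) - (l' : ℤ)| ≤ (c₀ : ℤ) →
        |(k : ℤ) - (k' : ℤ)| ≤ (c : ℤ) ∧ |(l : ℤ) - (l' : ℤ)| ≤ (c : ℤ)) := by
  obtain ⟨c, hc⟩ := hU.exists_cplx_le_log_dist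
  obtain ⟨c₁, hc₁⟩ := hU.exists_isLogLipschitz_cplx (e := fun (_ : Unit) l => l)
    Computable.snd ((Computable.const ()).pair Computable.id) fun _ _ => rfl
  obtain ⟨c₂, hc₂⟩ := hU.exists_isLogLipschitz_cplx Primrec₂.natPair.to_comp
    Primrec.unpair.to_comp Nat.unpair_pair
  refine ⟨⟨c, fun i i' => ⟨hc i i', Nat.dist_comm i i' ▸ hc i' i⟩⟩,
    ⟨c₁ + c₂ + 2, fun x y k l k' l' => max_le ?_ ?_⟩,
    ⟨2 * Nat.log 2 (c₁ + 3) + c₂, fun x y => ?_⟩,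
    fun c₀ => ⟨2 * (c₁ + c₂ + 2 * c₀) + 5, fun x y k l k' l' hk hl hk' hl' => ?_⟩⟩
  · exact ((hc₁ (enc x) ()).dist_le (le_max_right _ _)).trans (by gcongr <;> omega)
  · exact ((hc₂ (enc y) (enc x)).dist_le (le_max_left _ _)).trans (by gcongr <;> omega)
  · obtain ⟨B, hB⟩ := hU.exists_cplx_le (enc y)
    obtain ⟨l, hl⟩ :=
      (hc₁ (enc x) ()).exists_dist_comp_le (hc₂ (enc y) (enc x)) fun _ => hB _
    refine ⟨cplx U (enc x) l, l, by simp only [sub_self, abs_zero]; positivity, ?_⟩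
    rw [← Nat.cast_dist]
    exact_mod_cast hl
  · simp only [← Nat.cast_dist, Nat.cast_le] at hk hl hk' hl' ⊢
    exact max_le_iff.mp ((hc₁ (enc x) ()).max_dist_le (hc₂ (enc y) (enc x)) hk hl hk' hl')
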